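/- Let $A = \begin{bmatrix} 1 & 0 \\ 0 & 0 \end{bmatrix}$, $B = \begin{bmatrix} 0 & 0 \\ 0 & 1 \end{bmatrix}$, $X = \begin{bmatrix} 0 & 1 \\ 0 & 0 \end{bmatrix} \in \mathbb{M}_2$. Then the block matrix $M = \begin{bmatrix} A & X \\ X^* & B \end{bmatrix} \in \mathbb{M}_4$ is positive semi-definite and satisfies $\| M \|_{\infty} = \| A + B \|_{\infty} + 2 w(X)$, i.e. equality holds in the bound $\| M \|_{\infty} \le \| A + B \|_{\infty} + 2 w(X)$. -/

import Mathlib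

open Matrix
open scoped ComplexOrder

/-- The absolute value `|Z| = (Zᴴ Z)^(1/2)` of a square complex matrix. -/
noncomputable def matAbs {m : Type*} [Fintype m] [DecidableEq m]
    (Z : Matrix m m ℂ) : Matrix m m ℂ :=
  ((Matrix.posSemidef_conjTranspose_mul_self Z).1.eigenvectorUnitary : Matrix m m ℂ) *
    Matrix.diagonal ((↑) ∘ (fun i => Real.sqrt
      ((Matrix.posSemidef_conjTranspose_mul_self Z).1.eigenvalues i))) *
    (star (Matrix.posSemidef_conjTranspose_mul_self Z).1.eigenvectorUnitary : Matrix m m ℂ)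

/-- Functional calculus: apply `f : ℝ → ℝ` to the eigenvalues of a Hermitian matrix
(junk value `0` if the matrix is not Hermitian). -/
noncomputable def hermApply {m : Type*} [Fintype m] [DecidableEq m]
    (f : ℝ → ℝ) (S : Matrix m m ℂ) : Matrix m m ℂ :=
  if hS : S.IsHermitian then
    (hS.eigenvectorUnitary : Matrix m m ℂ) *
      Matrix.diagonal (fun i => (f (hS.eigenvalues i) : ℂ)) *
      (star (hS.eigenvectorUnitary : Matrix m m ℂ))
  else 0

/-- Real power of a positive semi-definite matrix by functional calculus. -/
noncomputable def matPow {m : Type*} [Fintype m] [DecidableEq m]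
    (S : Matrix m m ℂ) (p : ℝ) : Matrix m m ℂ :=
  hermApply (fun x => x ^ p) S

/-- A symmetric (unitarily invariant) norm on complex `m × m` matrices. -/
structure IsSymmetricNorm {m : Type*} [Fintype m] [DecidableEq m]
    (N : Matrix m m ℂ → ℝ) : Prop where
  add_le : ∀ A B, N (A + B) ≤ N A + N B
  smul : ∀ (c : ℂ) (A), N (c • A) = ‖c‖ * N A
  eq_zero_of : ∀ A, N A = 0 → A = 0
  unitary_mul_left : ∀ (U : Matrix.unitaryGroup m ℂ) (A), N (U * A) = N A
  mul_unitary_right : ∀ (U : Matrix.unitaryGroup m ℂ) (A), N (A * U) = N A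

/-- Eigenvalues of a Hermitian matrix (junk value `0` if not Hermitian). -/
noncomputable def eigVals {m : Type*} [Fintype m] [DecidableEq m]
    (Z : Matrix m m ℂ) : m → ℝ :=
  if hZ : Z.IsHermitian then hZ.eigenvalues else 0

/-- Eigenvalues of a Hermitian `n × n` matrix listed in decreasing order. -/
noncomputable def eigDown {n : ℕ} (Z : Matrix (Fin n) (Fin n) ℂ) : Fin n → ℝ :=
  fun i => (eigVals Z ∘ Tuple.sort (eigVals Z)) i.rev

/-- `Z ^ ↓`: the diagonal matrix listing the eigenvalues of `Z` in decreasing order. -/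
noncomputable def downMat {n : ℕ} (Z : Matrix (Fin n) (Fin n) ℂ) : Matrix (Fin n) (Fin n) ℂ :=
  Matrix.diagonal (fun i => (eigDown Z i : ℂ))

/-- Schatten `p`-norm. -/
noncomputable def schattenNorm {m : Type*} [Fintype m] [DecidableEq m]
    (p : ℝ) (Z : Matrix m m ℂ) : ℝ :=
  (∑ i, eigVals (matAbs Z) i ^ p) ^ (1 / p)

/-- Operator norm (largest singular value). -/
noncomputable def opNormInf {m : Type*} [Fintype m] [DecidableEq m]
    (Z : Matrix m m ℂ) : ℝ :=
  ⨆ i, Real.sqrt (eigVals (Zᴴ * Z) i)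

/-- Numerical range. -/
def numRange {m : Type*} [Fintype m] (X : Matrix m m ℂ) : Set ℂ :=
  {z | ∃ x : m → ℂ, ∑ i, ‖x i‖ ^ 2 = 1 ∧ dotProduct (star x) (X *ᵥ x) = z}

/-- Numerical radius. -/
noncomputable def numRadius {m : Type*} [Fintype m] (X : Matrix m m ℂ) : ℝ :=
  sSup ((fun z : ℂ => ‖z‖) '' numRange X)

/-! `M = v vᴴ` for `v = e₁ + e₄`, so `M ⪰ 0` and `M² = ‖v‖² M`; a nonzero Hermitian matrix with
`Z² = c Z` has spectrum in `{0, c}` and hence norm `|c|`, giving `‖M‖ = ‖v‖² = 2`. Likewise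
`A + B = 1` has norm `1`, and `w(X) = 1/2` since `|x̄₁ x₂| ≤ (|x₁|² + |x₂|²) / 2`, with equality
at `x = (1, 1) / √2`. -/

namespace Matrix

variable {m : Type*} [Fintype m]

theorem vecMulVec_self_star_mul_self (v : m → ℂ) :
    vecMulVec v (star v) * vecMulVec v (star v) =
      ((∑ i, ‖v i‖ ^ 2 : ℝ) : ℂ) • vecMulVec v (star v) := by
  rw [vecMulVec_mul_vecMulVec, vecMulVec_smul]
  congr 1
  push_cast
  simp [dotProduct, Complex.conj_mul']

variable [DecidableEq m]

theorem IsHermitian.eigenvalues_eq_zero_or_eq_of_mul_self_eq_smul {S : Matrix m m ℂ}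
    (hS : S.IsHermitian) {c : ℝ} (h : S * S = (c : ℂ) • S) (i : m) :
    hS.eigenvalues i = 0 ∨ hS.eigenvalues i = c := by
  set v : m → ℂ := ⇑(hS.eigenvectorBasis i)
  set μ := hS.eigenvalues i
  have hv : v ≠ 0 := fun hv₀ =>
    hS.eigenvectorBasis.orthonormal.ne_zero i (by ext k; exact congrFun hv₀ k)
  have hSv : S *ᵥ v = (μ : ℂ) • v := by
    rw [hS.mulVec_eigenvectorBasis i, RCLike.real_smul_eq_coe_smul (K := ℂ)]
    rfl
  have key : ((μ * (μ - c) : ℝ) : ℂ) • v = 0 := by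
    have := congrArg (· *ᵥ v) h
    simp only [← mulVec_mulVec, hSv, mulVec_smul, smul_mulVec] at this
    rw [smul_smul, smul_smul, ← sub_eq_zero, ← sub_smul] at this
    push_cast
    convert this using 2
    ring
  rcases (smul_eq_zero.mp key).resolve_right hv |> Complex.ofReal_eq_zero.mp |> mul_eq_zero.mp
    with h₀ | hc
  · exact .inl h₀
  · exact .inr (sub_eq_zero.mp hc)

theorem dotProduct_star_single_one_mulVec (i j : m) (x : m → ℂ) :
    star x ⬝ᵥ (single i j (1 : ℂ) *ᵥ x) = star (x i) * x j := by
  rw [single_mulVec, dotProduct, Finset.sum_eq_single i] <;> simp +contextual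

end Matrix

section OpNormInf

variable {m : Type*} [Fintype m] [DecidableEq m]

theorem opNormInf_eq_sqrt_of_mul_self_eq_smul {Z : Matrix m m ℂ} (hZ : Z ≠ 0) {d : ℝ}
    (h : (Zᴴ * Z) * (Zᴴ * Z) = (d : ℂ) • (Zᴴ * Z)) : opNormInf Z = √d := by
  have hS : (Zᴴ * Z).IsHermitian := isHermitian_conjTranspose_mul_self Z
  have hspec := hS.eigenvalues_eq_zero_or_eq_of_mul_self_eq_smul h
  obtain ⟨i₀, hi₀⟩ : ∃ i, hS.eigenvalues i = d := by
    by_contra! hne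
    exact hZ <| conjTranspose_mul_self_eq_zero.mp <| hS.eigenvalues_eq_zero_iff.mp <|
      funext fun i => (hspec i).resolve_right (hne i)
  have : Nonempty m := ⟨i₀⟩
  rw [opNormInf, eigVals, dif_pos hS]
  refine le_antisymm (ciSup_le fun i => ?_) ?_
  · rcases hspec i with h₀ | h₀ <;> simp [h₀, Real.sqrt_nonneg]
  · exact le_ciSup_of_le (Set.finite_range _).bddAbove i₀ (by rw [hi₀])

theorem opNormInf_of_isHermitian_of_mul_self_eq_smul {Z : Matrix m m ℂ} (hZ : Z.IsHermitian)
    (hZ₀ : Z ≠ 0) {c : ℝ} (h : Z * Z = (c : ℂ) • Z) : opNormInf Z = |c| := by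
  rw [← Real.sqrt_sq_eq_abs]
  refine opNormInf_eq_sqrt_of_mul_self_eq_smul hZ₀ ?_
  rw [hZ.eq, h, smul_mul_smul_comm, h, smul_smul, smul_smul]
  push_cast
  ring_nf

theorem opNormInf_one [Nonempty m] : opNormInf (1 : Matrix m m ℂ) = 1 := by
  simpa using opNormInf_of_isHermitian_of_mul_self_eq_smul isHermitian_one
    (one_ne_zero : (1 : Matrix m m ℂ) ≠ 0) (c := 1) (by simp)

theorem opNormInf_vecMulVec_self_star {v : m → ℂ} (hv : v ≠ 0) :
    opNormInf (vecMulVec v (star v)) = ∑ i, ‖v i‖ ^ 2 := by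
  have hne : vecMulVec v (star v) ≠ 0 := by
    obtain ⟨i, hi⟩ := Function.ne_iff.mp hv
    intro h₀
    have := congrFun (congrFun h₀ i) i
    simp_all
  rw [opNormInf_of_isHermitian_of_mul_self_eq_smul (posSemidef_vecMulVec_self_star v).isHermitian
    hne (vecMulVec_self_star_mul_self v), abs_of_nonneg (by positivity)]

end OpNormInf

section NumRadius

variable {m : Type*} [Fintype m] [DecidableEq m]

theorem isGreatest_norm_numRange_single_one {i j : m} (hij : i ≠ j) :
    IsGreatest ((fun z : ℂ => ‖z‖) '' numRange (single i j (1 : ℂ))) (1 / 2) := by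
  refine ⟨⟨1 / 2, ?_, by simp⟩, ?_⟩
  · refine ⟨fun k => if k = i ∨ k = j then ((√2)⁻¹ : ℝ) else 0, ?_, ?_⟩
    · rw [Fintype.sum_eq_add i j hij fun k hk => by simp [hk]]
      norm_num [hij.symm, inv_pow]
    · simp only [dotProduct_star_single_one_mulVec]
      simp [← mul_inv, ← Complex.ofReal_mul]
  · rintro _ ⟨_, ⟨x, hx, rfl⟩, rfl⟩
    have hpair : ‖x i‖ ^ 2 + ‖x j‖ ^ 2 ≤ 1 := hx ▸
      Finset.add_le_sum (f := fun k => ‖x k‖ ^ 2) (fun _ _ => by positivity)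
        (Finset.mem_univ i) (Finset.mem_univ j) hij
    simp only [dotProduct_star_single_one_mulVec, norm_mul, norm_star]
    nlinarith [sq_nonneg (‖x i‖ - ‖x j‖)]

theorem numRadius_single_one {i j : m} (hij : i ≠ j) :
    numRadius (single i j (1 : ℂ)) = 1 / 2 :=
  (isGreatest_norm_numRange_single_one hij).csSup_eq

end NumRadius

theorem equality_example :
    (Matrix.fromBlocks (!![1, 0; 0, 0] : Matrix (Fin 2) (Fin 2) ℂ)
        (!![0, 1; 0, 0] : Matrix (Fin 2) (Fin 2) ℂ)
        (!![0, 1; 0, 0] : Matrix (Fin 2) (Fin 2) ℂ)ᴴ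
        (!![0, 0; 0, 1] : Matrix (Fin 2) (Fin 2) ℂ)).PosSemidef ∧
      opNormInf (Matrix.fromBlocks (!![1, 0; 0, 0] : Matrix (Fin 2) (Fin 2) ℂ)
          (!![0, 1; 0, 0] : Matrix (Fin 2) (Fin 2) ℂ)
          (!![0, 1; 0, 0] : Matrix (Fin 2) (Fin 2) ℂ)ᴴ
          (!![0, 0; 0, 1] : Matrix (Fin 2) (Fin 2) ℂ)) =
        opNormInf ((!![1, 0; 0, 0] : Matrix (Fin 2) (Fin 2) ℂ) + !![0, 0; 0, 1]) +
          2 * numRadius (!![0, 1; 0, 0] : Matrix (Fin 2) (Fin 2) ℂ) := by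
  set v : Fin 2 ⊕ Fin 2 → ℂ := Sum.elim ![1, 0] ![0, 1]
  have hM : fromBlocks !![1, 0; 0, 0] !![0, 1; 0, 0] !![0, 1; 0, 0]ᴴ !![0, 0; 0, 1] =
      vecMulVec v (star v) := by
    ext (i | i) (j | j) <;> fin_cases i <;> fin_cases j <;> simp [v, vecMulVec_apply]
  have hv : v ≠ 0 := Function.ne_iff.mpr ⟨.inl 0, by simp [v]⟩
  have hnorm : ∑ k, ‖v k‖ ^ 2 = 2 := by
    norm_num [v, Fintype.sum_sum_type]
  have hAB : !![1, 0; 0, 0] + !![0, 0; 0, 1] = (1 : Matrix (Fin 2) (Fin 2) ℂ) := by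
    ext i j; fin_cases i <;> fin_cases j <;> simp
  have hX : !![0, 1; 0, 0] = single (0 : Fin 2) 1 (1 : ℂ) := by
    ext i j; fin_cases i <;> fin_cases j <;> simp
  rw [hM, hAB, hX, opNormInf_vecMulVec_self_star hv, hnorm, opNormInf_one,
    numRadius_single_one (by decide)]
  exact ⟨posSemidef_vecMulVec_self_star v, by norm_num⟩
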